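/- arXiv:1506.00180 — 2 statements merged into one kernel-verified Lean document; each statement's English description precedes it below -/
import Mathlib

section
/- Let G_{K₂} be the graph on vertices {v₁, v₂, v₃, v₄, u, w} with edges v₁u, uv₂, uw, v₂v₄, v₁v₃, v₃w, wv₄. Let G be a finite simple graph with at least one vertex, disjoint from G_{K₂}, and let H_G be the disjoint union of G_{K₂} and G together with all edges v_i x for x ∈ V(G) and i = 1, 2, 3, 4. Then the maximal independent sets of H_G are exactly: {v₁, v₄}, {v₂, v₃}, {v₁, v₂, w}, {v₃, v₄, u}, and the sets {u} ∪ M and {w} ∪ M where M ranges over maximal independent sets of G. -/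
/-- `M` is an independent set of `G` (as a finset): pairwise non-adjacent vertices. -/
def IsIndepF {V : Type*} (G : SimpleGraph V) (M : Finset V) : Prop :=
  ∀ v ∈ M, ∀ w ∈ M, ¬ G.Adj v w

/-- `M` is a maximal independent set of `G`: independent and not properly contained
in any other independent set. -/
def IsMaxIndepF {V : Type*} (G : SimpleGraph V) (M : Finset V) : Prop :=
  IsIndepF G M ∧ ∀ M' : Finset V, IsIndepF G M' → M ⊆ M' → M' = M

/-- The well-covered space of `G` over `F`: all weightings `w : V → F` whose sum over
every maximal independent set of `G` is the same constant. -/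
def wcSpace (F : Type*) [Field F] {V : Type*} (G : SimpleGraph V) : Submodule F (V → F) where
  carrier := {w | ∀ M N : Finset V, IsMaxIndepF G M → IsMaxIndepF G N →
    ∑ v ∈ M, w v = ∑ v ∈ N, w v}
  add_mem' := by
    intro a b ha hb M N hM hN
    simp only [Pi.add_apply, Finset.sum_add_distrib, ha M N hM hN, hb M N hM hN]
  zero_mem' := by intro M N _ _; simp
  smul_mem' := by
    intro c a ha M N hM hN
    simp only [Pi.smul_apply, smul_eq_mul, ← Finset.mul_sum, ha M N hM hN]

/-- The well-covered dimension of `G` over `F`. -/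
noncomputable def wcdim (F : Type*) [Field F] {V : Type*} (G : SimpleGraph V) : ℕ :=
  Module.finrank F (wcSpace F G)

/-- Edge list of the graph `G_{K₂}`: vertices `v₁ v₂ v₃ v₄ u w = 0 1 2 3 4 5`, edges
`v₁u, uv₂, uw, v₂v₄, v₁v₃, v₃w, wv₄`. -/
def GK2edges : List (Fin 6 × Fin 6) :=
  [(0, 4), (4, 1), (4, 5), (1, 3), (0, 2), (2, 5), (5, 3)]

/-- The graph `G_{K₂}`. -/
def GK2 : SimpleGraph (Fin 6) :=
  SimpleGraph.fromRel fun x y => (x, y) ∈ GK2edges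

/-- `H_G`: the disjoint union of `G_{K₂}` and `G`, with every edge `vᵢ x`
(`x ∈ V(G)`, `i = 1, 2, 3, 4`) added. -/
def HG {V : Type*} (G : SimpleGraph V) : SimpleGraph (Fin 6 ⊕ V) :=
  SimpleGraph.fromRel fun x y =>
    match x, y with
    | Sum.inl a, Sum.inl b => (a, b) ∈ GK2edges
    | Sum.inl a, Sum.inr _ => a = 0 ∨ a = 1 ∨ a = 2 ∨ a = 3
    | Sum.inr _, Sum.inl b => b = 0 ∨ b = 1 ∨ b = 2 ∨ b = 3
    | Sum.inr x, Sum.inr y => G.Adj x y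

/-!
A set is maximal independent iff it is independent and dominating, and both properties split
along `Fin 6 ⊕ V` into a part `T ⊆ V(G_{K₂})` and a part `M ⊆ V(G)`. If `M ≠ ∅`, then `T` avoids
`v₁, …, v₄`, so `T` is `{u}` or `{w}`, and since nothing in `T` sees `V(G)`, `M` must dominate `G`
on its own. If `M = ∅`, then `T` is maximal independent in `G_{K₂}` and must meet `{v₁, …, v₄}` to
dominate the nonempty `V(G)`; the four such sets are found by enumerating all subsets of `Fin 6`.
-/

open Finset Sum

section Domination

variable {W : Type*} (G : SimpleGraph W)

def IsDominatingF (S : Finset W) : Prop :=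
  ∀ v ∉ S, ∃ u ∈ S, G.Adj u v

instance [DecidableRel G.Adj] : DecidablePred (IsIndepF G) :=
  fun S => inferInstanceAs (Decidable (∀ v ∈ S, ∀ w ∈ S, ¬ G.Adj v w))

instance [Fintype W] [DecidableEq W] [DecidableRel G.Adj] : DecidablePred (IsDominatingF G) :=
  fun S => inferInstanceAs (Decidable (∀ v ∉ S, ∃ u ∈ S, G.Adj u v))

variable {G} [DecidableEq W] {S : Finset W}

lemma IsIndepF.insert (hS : IsIndepF G S) {v : W} (hv : ∀ u ∈ S, ¬ G.Adj u v) :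
    IsIndepF G (insert v S) := by
  intro a ha b hb
  rcases mem_insert.1 ha with rfl | haS <;> rcases mem_insert.1 hb with rfl | hbS
  · exact G.irrefl
  · exact fun h => hv b hbS h.symm
  · exact hv a haS
  · exact hS a haS b hbS

lemma isMaxIndepF_iff : IsMaxIndepF G S ↔ IsIndepF G S ∧ IsDominatingF G S := by
  refine ⟨fun ⟨hS, hmax⟩ => ⟨hS, fun v hv => ?_⟩, fun ⟨hS, hdom⟩ => ⟨hS, fun S' hS' hsub => ?_⟩⟩
  · by_contra! hfree
    exact hv (hmax _ (hS.insert hfree) (subset_insert v S) ▸ mem_insert_self v S)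
  · refine (subset_antisymm hsub fun v hv => ?_).symm
    by_contra hvS
    obtain ⟨u, hu, huv⟩ := hdom v hvS
    exact hS' u (hsub hu) v hv huv

lemma IsMaxIndepF.nonempty [Nonempty W] (hS : IsMaxIndepF G S) : S.Nonempty := by
  obtain ⟨v⟩ := ‹Nonempty W›
  by_cases hv : v ∈ S
  · exact ⟨v, hv⟩
  · obtain ⟨u, hu, -⟩ := (isMaxIndepF_iff.1 hS).2 v hv
    exact ⟨u, hu⟩

end Domination

section DisjSum

variable {α β : Type*}

lemma Finset.singleton_inl_eq_disjSum (a : α) :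
    ({inl a} : Finset (α ⊕ β)) = ({a} : Finset α).disjSum ∅ := by
  ext (x | y) <;> simp

variable [DecidableEq α] [DecidableEq β]

lemma Finset.image_inr_eq_disjSum (t : Finset β) : t.image inr = (∅ : Finset α).disjSum t := by
  ext (x | y) <;> simp

lemma Finset.insert_inl_disjSum (a : α) (s : Finset α) (t : Finset β) :
    insert (inl a) (s.disjSum t) = (insert a s).disjSum t := by
  ext (x | y) <;> simp

end DisjSum

instance : DecidableRel GK2.Adj := fun a b =>
  decidable_of_iff (a ≠ b ∧ ((a, b) ∈ GK2edges ∨ (b, a) ∈ GK2edges))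
    (by rw [GK2, SimpleGraph.fromRel_adj])

lemma GK2_indep_dominating_meeting_corners_iff (T : Finset (Fin 6)) :
    IsIndepF GK2 T ∧ IsDominatingF GK2 T ∧ (∃ a ∈ T, a < 4) ↔
      T = {0, 3} ∨ T = {1, 2} ∨ T = {0, 1, 5} ∨ T = {2, 3, 4} := by
  revert T; decide

lemma GK2_indep_off_corners_dominating_rest_iff (T : Finset (Fin 6)) :
    IsIndepF GK2 T ∧ (∀ a ∈ T, 4 ≤ a) ∧ (∀ a ∉ T, (∃ b ∈ T, GK2.Adj b a) ∨ a < 4) ↔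
      T = {4} ∨ T = {5} := by
  revert T; decide

section HG

variable {V : Type*} (G : SimpleGraph V)

@[simp] lemma HG_adj_inl_inl (a b : Fin 6) : (HG G).Adj (inl a) (inl b) ↔ GK2.Adj a b := by
  simp [HG, GK2, SimpleGraph.fromRel_adj]

-- The vertices `a < 4` of `GK2` are `v₁, …, v₄`, the ones joined to all of `V(G)`.
@[simp] lemma HG_adj_inl_inr (a : Fin 6) (x : V) : (HG G).Adj (inl a) (inr x) ↔ a < 4 := by
  simp only [HG, SimpleGraph.fromRel_adj, ne_eq, reduceCtorEq, not_false_eq_true, true_and, or_self]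
  omega

@[simp] lemma HG_adj_inr_inl (a : Fin 6) (x : V) : (HG G).Adj (inr x) (inl a) ↔ a < 4 := by
  rw [SimpleGraph.adj_comm, HG_adj_inl_inr]

@[simp] lemma HG_adj_inr_inr (x y : V) : (HG G).Adj (inr x) (inr y) ↔ G.Adj x y := by
  simp only [HG, SimpleGraph.fromRel_adj, ne_eq, inr.injEq]
  exact ⟨fun ⟨_, h⟩ => h.elim id G.adj_symm, fun h => ⟨h.ne, .inl h⟩⟩

variable {G} {T : Finset (Fin 6)} {M : Finset V}

lemma isIndepF_HG_disjSum_iff :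
    IsIndepF (HG G) (T.disjSum M) ↔
      IsIndepF GK2 T ∧ IsIndepF G M ∧ (M.Nonempty → ∀ a ∈ T, 4 ≤ a) := by
  simp only [IsIndepF, Sum.forall, inl_mem_disjSum, inr_mem_disjSum, HG_adj_inl_inl,
    HG_adj_inl_inr, HG_adj_inr_inl, HG_adj_inr_inr, not_lt]
  constructor
  · rintro ⟨hT, hM⟩
    exact ⟨fun a ha => (hT a ha).1, fun x hx => (hM x hx).2, fun ⟨x, hx⟩ a ha => (hT a ha).2 x hx⟩
  · rintro ⟨hT, hM, hTM⟩
    exact ⟨fun a ha => ⟨hT a ha, fun x hx => hTM ⟨x, hx⟩ a ha⟩,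
      fun x hx => ⟨hTM ⟨x, hx⟩, hM x hx⟩⟩

lemma isDominatingF_HG_disjSum_iff :
    IsDominatingF (HG G) (T.disjSum M) ↔
      (∀ a ∉ T, (∃ b ∈ T, GK2.Adj b a) ∨ (M.Nonempty ∧ a < 4)) ∧
      (∀ x ∉ M, (∃ a ∈ T, a < 4) ∨ ∃ y ∈ M, G.Adj y x) := by
  simp only [IsDominatingF, Sum.forall, Sum.exists, inl_mem_disjSum, inr_mem_disjSum,
    HG_adj_inl_inl, HG_adj_inl_inr, HG_adj_inr_inl, HG_adj_inr_inr, exists_and_right]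
  rfl

variable [DecidableEq V]

lemma isMaxIndepF_HG_disjSum_empty_iff [Nonempty V] :
    IsMaxIndepF (HG G) (T.disjSum ∅) ↔
      T = {0, 3} ∨ T = {1, 2} ∨ T = {0, 1, 5} ∨ T = {2, 3, 4} := by
  rw [isMaxIndepF_iff, isIndepF_HG_disjSum_iff, isDominatingF_HG_disjSum_iff,
    ← GK2_indep_dominating_meeting_corners_iff]
  simp [IsIndepF, IsDominatingF]

lemma isMaxIndepF_HG_disjSum_iff_of_nonempty (hM : M.Nonempty) :
    IsMaxIndepF (HG G) (T.disjSum M) ↔ IsMaxIndepF G M ∧ (T = {4} ∨ T = {5}) := by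
  rw [isMaxIndepF_iff, isMaxIndepF_iff, isIndepF_HG_disjSum_iff, isDominatingF_HG_disjSum_iff,
    ← GK2_indep_off_corners_dominating_rest_iff]
  simp only [hM, true_and, forall_const]
  constructor
  · rintro ⟨⟨hT, hMi, hoff⟩, hdomT, hdomM⟩
    refine ⟨⟨hMi, fun x hx => (hdomM x hx).resolve_left ?_⟩, hT, hoff, hdomT⟩
    exact fun ⟨a, ha, h4⟩ => (hoff a ha).not_gt h4
  · rintro ⟨⟨hMi, hdomM⟩, hT, hoff, hdomT⟩
    exact ⟨⟨hT, hMi, hoff⟩, hdomT, fun x hx => .inr (hdomM x hx)⟩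

lemma isMaxIndepF_HG_disjSum_iff [Nonempty V] :
    IsMaxIndepF (HG G) (T.disjSum M) ↔
      (M = ∅ ∧ (T = {0, 3} ∨ T = {1, 2} ∨ T = {0, 1, 5} ∨ T = {2, 3, 4})) ∨
      (IsMaxIndepF G M ∧ (T = {4} ∨ T = {5})) := by
  rcases M.eq_empty_or_nonempty with rfl | hM
  · have : ¬ IsMaxIndepF G ∅ := fun h => not_nonempty_empty h.nonempty
    rw [isMaxIndepF_HG_disjSum_empty_iff]
    simp [this]
  · simp [isMaxIndepF_HG_disjSum_iff_of_nonempty hM, hM.ne_empty]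

end HG

theorem maxIndep_HG_general {V : Type*} [DecidableEq V] [Nonempty V]
    (G : SimpleGraph V) (S : Finset (Fin 6 ⊕ V)) :
    IsMaxIndepF (HG G) S ↔
      S = {Sum.inl 0, Sum.inl 3} ∨ S = {Sum.inl 1, Sum.inl 2} ∨
      S = {Sum.inl 0, Sum.inl 1, Sum.inl 5} ∨ S = {Sum.inl 2, Sum.inl 3, Sum.inl 4} ∨
      (∃ M : Finset V, IsMaxIndepF G M ∧
        (S = insert (Sum.inl 4) (M.image Sum.inr) ∨
         S = insert (Sum.inl 5) (M.image Sum.inr))) := by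
  obtain ⟨T, M, rfl⟩ : ∃ (T : Finset (Fin 6)) (M : Finset V), S = T.disjSum M :=
    ⟨_, _, S.toLeft_disjSum_toRight.symm⟩
  simp only [Finset.singleton_inl_eq_disjSum, Finset.image_inr_eq_disjSum,
    Finset.insert_inl_disjSum, disjSum_inj, isMaxIndepF_HG_disjSum_iff]
  grind

/-- The maximal independent sets of `H_G` are exactly `{v₁,v₄}`, `{v₂,v₃}`, `{v₁,v₂,w}`,
`{v₃,v₄,u}`, and `{u} ∪ M`, `{w} ∪ M` for `M` a maximal independent set of `G`. -/
theorem maxIndep_HG {V : Type*} [Fintype V] [DecidableEq V] [Nonempty V]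
    (G : SimpleGraph V) (S : Finset (Fin 6 ⊕ V)) :
    IsMaxIndepF (HG G) S ↔
      S = {Sum.inl 0, Sum.inl 3} ∨ S = {Sum.inl 1, Sum.inl 2} ∨
      S = {Sum.inl 0, Sum.inl 1, Sum.inl 5} ∨ S = {Sum.inl 2, Sum.inl 3, Sum.inl 4} ∨
      (∃ M : Finset V, IsMaxIndepF G M ∧
        (S = insert (Sum.inl 4) (M.image Sum.inr) ∨
         S = insert (Sum.inl 5) (M.image Sum.inr))) :=
  maxIndep_HG_general G S
end

section
/- Let G_{K₂} be the graph on vertices {v₁, v₂, v₃, v₄, u, w} with edges v₁u, uv₂, uw, v₂v₄, v₁v₃, v₃w, wv₄. Let G be a finite simple graph with at least one vertex, and let H_G be the disjoint union of G_{K₂} and G with all edges v_i x added for x ∈ V(G), i = 1, 2, 3, 4. Then for every field F: wcdim(H_G, F) = wcdim(G, F) + 2 if char(F) = 2, and wcdim(H_G, F) = wcdim(G, F) + 1 if char(F) ≠ 2. -/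
/-! The maximal independent sets of `H_G` are the four maximal independent sets
`{v₁, v₂, w}`, `{v₃, v₄, u}`, `{v₁, v₄}`, `{v₂, v₃}` of `G_{K₂}`, which meet `{v₁, …, v₄}` and
so exclude `V(G)`, together with `{u} ∪ N` and `{w} ∪ N` for `N` maximal independent in `G`.
For a weighting `f` of `H_G`, equalising the weights of these sets makes `f` well-covered on
`G`, forces `f(w) = f(u)`, and determines `f` on `G_{K₂}` from `f(v₁)`, `t = f(u)` and the
common weight of the maximal independent sets of `G`, subject only to `2t = 0`. So the
well-covered space of `H_G` is `wcSpace G × F × {t | 2t = 0}`, and the last factor is `F` or `0`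
according as `char F = 2` or not. -/

open Finset Sum Submodule

theorem Finset.forall_disjSum {α β : Type*} {P : Finset (α ⊕ β) → Prop} :
    (∀ M, P M) ↔ ∀ (L : Finset α) (R : Finset β), P (L.disjSum R) :=
  ⟨fun h _ _ => h _, fun h M => toLeft_disjSum_toRight (u := M) ▸ h _ _⟩

section MaxIndep

variable {V : Type*} (G : SimpleGraph V)

theorem isMaxIndepF_iff_maximal {M : Finset V} : IsMaxIndepF G M ↔ Maximal (IsIndepF G) M :=
  and_congr_right fun _ => forall₂_congr fun _ _ =>
    ⟨fun h hsub => (h hsub).le, fun h hsub => (h hsub).antisymm hsub⟩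

theorem exists_isMaxIndepF [Finite V] : ∃ M, IsMaxIndepF G M := by
  obtain ⟨M, -, hM⟩ := Finite.exists_le_maximal (p := IsIndepF G) (a := ∅) (by simp [IsIndepF])
  exact ⟨M, (isMaxIndepF_iff_maximal G).2 hM⟩

theorem isMaxIndepF_iff_s9 {M : Finset V} :
    IsMaxIndepF G M ↔ IsIndepF G M ∧ ∀ v ∉ M, ∃ u ∈ M, G.Adj v u := by
  classical
  refine ⟨fun ⟨hI, hmax⟩ => ⟨hI, fun v hv => ?_⟩, fun ⟨hI, hdom⟩ => ⟨hI, fun M' hM' hsub => ?_⟩⟩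
  · by_contra! h
    have hins : IsIndepF G (insert v M) := by
      intro a ha b hb
      simp only [mem_insert] at ha hb
      rcases ha with rfl | ha <;> rcases hb with rfl | hb
      · exact G.irrefl
      · exact h b hb
      · exact fun hab => h a ha hab.symm
      · exact hI a ha b hb
    exact hv (hmax _ hins (subset_insert _ _) ▸ mem_insert_self v M)
  · refine Subset.antisymm (fun v hv => ?_) hsub
    by_contra hvM
    obtain ⟨u, hu, hvu⟩ := hdom v hvM
    exact hM' v hv u (hsub hu) hvu

instance [DecidableRel G.Adj] (M : Finset V) : Decidable (IsIndepF G M) :=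
  inferInstanceAs (Decidable (∀ v ∈ M, ∀ w ∈ M, ¬ G.Adj v w))

instance [Fintype V] [DecidableEq V] [DecidableRel G.Adj] (M : Finset V) :
    Decidable (IsMaxIndepF G M) :=
  decidable_of_iff _ (isMaxIndepF_iff_s9 G).symm

end MaxIndep

section PartialJoin

variable {α β : Type*}

def partialJoin (A : SimpleGraph α) (S : Set α) (B : SimpleGraph β) : SimpleGraph (α ⊕ β) where
  Adj
    | inl a, inl b => A.Adj a b
    | inl a, inr _ => a ∈ S
    | inr _, inl b => b ∈ S
    | inr x, inr y => B.Adj x y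
  symm := ⟨by rintro (a | x) (b | y) h <;> first | exact h.symm | exact h⟩
  loopless := ⟨by rintro (a | x) h; exacts [A.irrefl h, B.irrefl h]⟩

variable (A : SimpleGraph α) (S : Set α) (B : SimpleGraph β)

@[simp] theorem partialJoin_adj_inl_inl {a b : α} :
    (partialJoin A S B).Adj (inl a) (inl b) ↔ A.Adj a b := Iff.rfl

@[simp] theorem partialJoin_adj_inl_inr {a : α} {x : β} :
    (partialJoin A S B).Adj (inl a) (inr x) ↔ a ∈ S := Iff.rfl

@[simp] theorem partialJoin_adj_inr_inl {x : β} {a : α} :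
    (partialJoin A S B).Adj (inr x) (inl a) ↔ a ∈ S := Iff.rfl

@[simp] theorem partialJoin_adj_inr_inr {x y : β} :
    (partialJoin A S B).Adj (inr x) (inr y) ↔ B.Adj x y := Iff.rfl

variable {A S B} {L : Finset α} {R : Finset β}

theorem isIndepF_partialJoin_disjSum :
    IsIndepF (partialJoin A S B) (L.disjSum R) ↔
      IsIndepF A L ∧ IsIndepF B R ∧ ∀ a ∈ L, ∀ x ∈ R, a ∉ S := by
  simp only [IsIndepF, Sum.forall, inl_mem_disjSum, inr_mem_disjSum, partialJoin_adj_inl_inl,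
    partialJoin_adj_inl_inr, partialJoin_adj_inr_inl, partialJoin_adj_inr_inr]
  grind

theorem dominates_partialJoin_disjSum :
    (∀ v ∉ L.disjSum R, ∃ u ∈ L.disjSum R, (partialJoin A S B).Adj v u) ↔
      (∀ a ∉ L, (∃ b ∈ L, A.Adj a b) ∨ (a ∈ S ∧ R.Nonempty)) ∧
      (∀ x ∉ R, (∃ a ∈ L, a ∈ S) ∨ ∃ y ∈ R, B.Adj x y) := by
  simp only [Sum.forall, Sum.exists, inl_mem_disjSum, inr_mem_disjSum, partialJoin_adj_inl_inl,
    partialJoin_adj_inl_inr, partialJoin_adj_inr_inl, partialJoin_adj_inr_inr]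
  grind

theorem isMaxIndepF_partialJoin_disjSum [Nonempty β] :
    IsMaxIndepF (partialJoin A S B) (L.disjSum R) ↔
      (R = ∅ ∧ IsMaxIndepF A L ∧ ∃ a ∈ L, a ∈ S) ∨
      (IsMaxIndepF B R ∧ IsIndepF A L ∧ (∀ a ∈ L, a ∉ S) ∧
        ∀ a ∉ L, a ∉ S → ∃ b ∈ L, A.Adj a b) := by
  rw [isMaxIndepF_iff_s9, isIndepF_partialJoin_disjSum, dominates_partialJoin_disjSum,
    isMaxIndepF_iff_s9, isMaxIndepF_iff_s9]
  obtain rfl | hR := R.eq_empty_or_nonempty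
  · simp [IsIndepF, and_assoc]
  · simp only [hR, and_true, hR.ne_empty, false_and, false_or]
    grind

end PartialJoin

section HG

variable {V : Type*} (G : SimpleGraph V)

theorem HG_eq_partialJoin : HG G = partialJoin GK2 {0, 1, 2, 3} G := by
  ext (a | x) (b | y) <;> simp [HG, GK2, partialJoin]
  exact ⟨fun h => h.2.elim id G.adj_symm, fun h => ⟨G.ne_of_adj h, .inl h⟩⟩

instance inst_s9 : DecidableRel GK2.Adj := fun _ _ => decidable_of_iff' _ (SimpleGraph.fromRel_adj _ _ _)

theorem isMaxIndepF_GK2_meeting_iff : ∀ L : Finset (Fin 6),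
    IsMaxIndepF GK2 L ∧ (∃ a ∈ L, a ∈ ({0, 1, 2, 3} : Set (Fin 6))) ↔
      L ∈ ({{0, 1, 5}, {2, 3, 4}, {0, 3}, {1, 2}} : Finset (Finset (Fin 6))) := by
  decide

theorem isIndepF_GK2_avoiding_dominating_iff : ∀ L : Finset (Fin 6),
    IsIndepF GK2 L ∧ (∀ a ∈ L, a ∉ ({0, 1, 2, 3} : Set (Fin 6))) ∧
      (∀ a ∉ L, a ∉ ({0, 1, 2, 3} : Set (Fin 6)) → ∃ b ∈ L, GK2.Adj a b) ↔ L = {4} ∨ L = {5} := by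
  decide

theorem isMaxIndepF_HG_disjSum [Nonempty V] {L : Finset (Fin 6)} {R : Finset V} :
    IsMaxIndepF (HG G) (L.disjSum R) ↔
      (R = ∅ ∧ L ∈ ({{0, 1, 5}, {2, 3, 4}, {0, 3}, {1, 2}} : Finset (Finset (Fin 6)))) ∨
      ((L = {4} ∨ L = {5}) ∧ IsMaxIndepF G R) := by
  rw [HG_eq_partialJoin, isMaxIndepF_partialJoin_disjSum, ← isMaxIndepF_GK2_meeting_iff,
    ← isIndepF_GK2_avoiding_dominating_iff, and_comm (a := IsMaxIndepF G R)]

end HG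

section WellCovered

variable {F : Type*} [Field F]

theorem mem_wcSpace_iff_forall_sum_eq {V : Type*} {G : SimpleGraph V} {M₀ : Finset V}
    (hM₀ : IsMaxIndepF G M₀) {w : V → F} :
    w ∈ wcSpace F G ↔ ∀ M, IsMaxIndepF G M → ∑ v ∈ M, w v = ∑ v ∈ M₀, w v :=
  ⟨fun h M hM => h M M₀ hM hM₀, fun h M N hM hN => (h M hM).trans (h N hN).symm⟩

def gk2Weight (s a t : F) : Fin 6 → F := ![a, s - a, a - t, t + s - a, t, t]

variable {V : Type*} {G : SimpleGraph V}

theorem mem_wcSpace_HG_iff [Nonempty V] {N₀ : Finset V} (hN₀ : IsMaxIndepF G N₀)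
    (w : Fin 6 ⊕ V → F) :
    w ∈ wcSpace F (HG G) ↔ w ∘ inr ∈ wcSpace F G ∧ w (inl 4) ∈ torsionBy F F 2 ∧
      w ∘ inl = gk2Weight (∑ x ∈ N₀, w (inr x)) (w (inl 0)) (w (inl 4)) := by
  have huN₀ : IsMaxIndepF (HG G) (({4} : Finset (Fin 6)).disjSum N₀) :=
    (isMaxIndepF_HG_disjSum G).2 (.inr ⟨.inl rfl, hN₀⟩)
  rw [mem_wcSpace_iff_forall_sum_eq huN₀, Finset.forall_disjSum]
  simp only [isMaxIndepF_HG_disjSum, sum_disjSum, or_imp, forall_and, and_imp, forall_eq,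
    mem_insert, mem_singleton, @forall_comm (Finset (Fin 6)) (Finset V), sum_empty, add_zero,
    sum_singleton]
  simp (disch := decide) only [sum_insert, sum_singleton]
  rw [mem_wcSpace_iff_forall_sum_eq hN₀, mem_torsionBy_iff, smul_eq_mul]
  simp only [Function.comp_apply, add_right_inj]
  constructor
  · rintro ⟨⟨e1, e2, e3, e4⟩, hR4, hR5⟩
    have h5 : w (inl 5) = w (inl 4) := by linear_combination hR5 N₀ hN₀
    have h2 : 2 * w (inl 4) = 0 := by linear_combination e1 + e2 - e3 - e4 - h5
    refine ⟨hR4, h2, funext fun i => ?_⟩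
    fin_cases i <;> simp only [Fin.reduceFinMk, Function.comp_apply, gk2Weight, Matrix.cons_val,
      Matrix.cons_val_zero, Matrix.cons_val_one, Fin.isValue]
    · linear_combination e1 - h5
    · linear_combination e4 - e1 + h5 + h2
    · linear_combination e3
    · exact h5
  · rintro ⟨hR, h2, hl⟩
    have hi := congrFun hl
    simp only [Function.comp_apply] at hi
    rw [hi 1, hi 2, hi 3, hi 5]
    simp only [gk2Weight, Matrix.cons_val, Matrix.cons_val_zero, Matrix.cons_val_one, Fin.isValue]
    exact ⟨⟨by ring, by ring, by ring, by linear_combination -h2⟩, hR, fun b hb => by rw [hR b hb]⟩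

noncomputable def wcSpaceHGEquiv [Nonempty V] {N₀ : Finset V} (hN₀ : IsMaxIndepF G N₀) :
    wcSpace F (HG G) ≃ₗ[F] wcSpace F G × F × torsionBy F F (2 : F) where
  toFun w := (⟨w.1 ∘ inr, ((mem_wcSpace_HG_iff hN₀ w.1).1 w.2).1⟩, w.1 (inl 0),
    ⟨w.1 (inl 4), ((mem_wcSpace_HG_iff hN₀ w.1).1 w.2).2.1⟩)
  map_add' _ _ := rfl
  map_smul' _ _ := rfl
  invFun p := ⟨Sum.elim (gk2Weight (∑ x ∈ N₀, p.1.1 x) p.2.1 p.2.2) p.1,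
    (mem_wcSpace_HG_iff hN₀ _).2 ⟨by exact p.1.2, p.2.2.2, rfl⟩⟩
  left_inv w := Subtype.ext <| by
    conv_rhs => rw [← Sum.elim_comp_inl_inr w.1, ((mem_wcSpace_HG_iff hN₀ w.1).1 w.2).2.2]
    rfl
  right_inv _ := rfl

end WellCovered

theorem torsionBy_two_eq_top {F : Type*} [Field F] (h : ringChar F = 2) :
    torsionBy F F (2 : F) = ⊤ := by
  have h2 : (2 : F) = 0 := by exact_mod_cast h ▸ ringChar.Nat.cast_ringChar
  simp [h2, eq_top_iff, SetLike.le_def]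

theorem torsionBy_two_eq_bot {F : Type*} [Field F] (h : ringChar F ≠ 2) :
    torsionBy F F (2 : F) = ⊥ := by
  simp [eq_bot_iff, SetLike.le_def, Ring.two_ne_zero h]

/-- `wcdim(H_G, F) = wcdim(G, F) + 2` if `char F = 2`, and `wcdim(G, F) + 1` otherwise. -/
theorem wcdim_HG {V : Type*} [Fintype V] [Nonempty V] (G : SimpleGraph V)
    (F : Type*) [Field F] :
    (ringChar F = 2 → wcdim F (HG G) = wcdim F G + 2) ∧
    (ringChar F ≠ 2 → wcdim F (HG G) = wcdim F G + 1) := by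
  obtain ⟨N₀, hN₀⟩ := exists_isMaxIndepF G
  have hdim : wcdim F (HG G) = wcdim F G + 1 + Module.finrank F (torsionBy F F (2 : F)) := by
    rw [wcdim, (wcSpaceHGEquiv hN₀).finrank_eq, Module.finrank_prod, Module.finrank_prod,
      Module.finrank_self, wcdim, add_assoc]
  refine ⟨fun h => ?_, fun h => ?_⟩
  · rw [hdim, torsionBy_two_eq_top h, finrank_top, Module.finrank_self]
  · rw [hdim, torsionBy_two_eq_bot h, finrank_bot, add_zero]
end
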